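/- Let F : C ⥤ X be a faithful essential localization, and assume that every pullback stable essential monomorphism in X is an isomorphism. Then a morphism m in C is a pullback stable essential monomorphism if and only if F(m) is an isomorphism in X. -/

import Mathlib

open CategoryTheory Limits

/-- A morphism `m` is an essential monomorphism if it is a monomorphism and every
morphism `f` such that `m ≫ f` is a monomorphism is itself a monomorphism. -/
def IsEssentialMono {C : Type*} [CategoryTheory.Category C] {S A : C} (m : S ⟶ A) : Prop :=
  CategoryTheory.Mono m ∧
    ∀ ⦃B : C⦄ (f : A ⟶ B), CategoryTheory.Mono (m ≫ f) → CategoryTheory.Mono f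

/-- A morphism `m : S ⟶ A` is a pullback stable essential monomorphism if for every
morphism `u : X ⟶ A` the pullback projection `S ×_A X ⟶ X` of `m` along `u` is an
essential monomorphism. -/
def IsStableEssentialMono {C : Type*} [CategoryTheory.Category C]
    [CategoryTheory.Limits.HasPullbacks C] {S A : C} (m : S ⟶ A) : Prop :=
  ∀ ⦃X : C⦄ (u : X ⟶ A), IsEssentialMono (CategoryTheory.Limits.pullback.snd m u)

/-!
A pullback stable essential monomorphism `m` of `C` is sent by `F` to one of `X`: a morphism
`u : Y ⟶ F A` is, up to the isomorphism `F (G Y ×_{G F A} A) ≅ Y`, the image of a morphism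
`r` of `C`, so the pullback of `F m` along `u` is the image of the pullback of `m` along `r`;
and `F` sends essential monomorphisms to essential monomorphisms, because a test morphism
`F P ⟶ B` can be transposed to `P ⟶ G B` and `F` is faithful. Conversely, since `F` is faithful
and preserves pullbacks, any morphism it inverts has pullbacks inverted by `F`, and these are
essential monomorphisms.
-/

section EssentialMono

variable {C : Type*} [Category C]

lemma IsEssentialMono.isIso_comp {S S' A : C} {f : S ⟶ A} (hf : IsEssentialMono f)
    (i : S' ⟶ S) [IsIso i] : IsEssentialMono (i ≫ f) :=
  have := hf.1
  ⟨mono_comp i f, fun _ g hg => hf.2 g (by simpa using mono_comp (inv i) ((i ≫ f) ≫ g))⟩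

lemma IsEssentialMono.comp_isIso {S A A' : C} {f : S ⟶ A} (hf : IsEssentialMono f)
    (j : A ⟶ A') [IsIso j] : IsEssentialMono (f ≫ j) :=
  have := hf.1
  ⟨mono_comp f j, fun _ g hg => by
    have : Mono (j ≫ g) := hf.2 _ (by simpa using hg)
    simpa using mono_comp (inv j) (j ≫ g)⟩

variable {X : Type*} [Category X] (F : C ⥤ X)

lemma isEssentialMono_of_isIso_map [F.Faithful] [F.PreservesMonomorphisms] {S A : C}
    (q : S ⟶ A) [IsIso (F.map q)] : IsEssentialMono q :=
  ⟨F.mono_of_mono_map inferInstance, fun _ f _ => F.mono_of_mono_map <| by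
    simpa using mono_comp (inv (F.map q)) (F.map (q ≫ f))⟩

lemma isStableEssentialMono_of_isIso_map [HasPullbacks C] [F.Faithful]
    [PreservesLimitsOfShape WalkingCospan F] {S A : C} (m : S ⟶ A) [IsIso (F.map m)] :
    IsStableEssentialMono m := fun _ u =>
  have := ((IsPullback.of_hasPullback m u).map F).isIso_snd_of_isIso
  isEssentialMono_of_isIso_map F _

end EssentialMono

namespace CategoryTheory.Adjunction

variable {C : Type*} [Category C] {X : Type*} [Category X] {F : C ⥤ X} {G : X ⥤ C}
  (adj : F ⊣ G)

lemma isEssentialMono_map [IsIso adj.counit] [F.Faithful]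
    [F.PreservesMonomorphisms] {Q P : C} {ν : Q ⟶ P} (hν : IsEssentialMono ν) :
    IsEssentialMono (F.map ν) := by
  have := hν.1
  refine ⟨F.map_mono ν, fun B x hx => ?_⟩
  obtain ⟨g, rfl⟩ := (adj.homEquiv P B).symm.surjective x
  rw [adj.homEquiv_counit] at hx ⊢
  have hνg : Mono (ν ≫ g) := F.mono_of_mono_map <| by
    have : Mono (F.map (ν ≫ g) ≫ adj.counit.app B) := by simpa using hx
    exact mono_of_mono _ (adj.counit.app B)
  have := hν.2 g hνg
  infer_instance

lemma exists_iso_comp_eq_map [IsIso adj.counit] [HasPullbacks C]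
    [PreservesLimitsOfShape WalkingCospan F] {Y : X} {A : C} (u : Y ⟶ F.obj A) :
    ∃ (P : C) (r : P ⟶ A) (e : F.obj P ≅ Y), e.hom ≫ u = F.map r := by
  have : IsIso (F.map (adj.unit.app A)) :=
    isIso_of_comp_hom_eq_id _ (adj.left_triangle_components A)
  have := ((IsPullback.of_hasPullback (G.map u) (adj.unit.app A)).map F).isIso_fst_of_isIso
  refine ⟨_, pullback.snd (G.map u) (adj.unit.app A),
    asIso (F.map (pullback.fst _ _)) ≪≫ asIso (adj.counit.app Y), ?_⟩
  calc (asIso (F.map (pullback.fst _ _)) ≪≫ asIso (adj.counit.app Y)).hom ≫ u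
      = F.map (pullback.fst _ _ ≫ G.map u) ≫ adj.counit.app (F.obj A) := by simp
    _ = F.map (pullback.snd _ _) := by
      rw [pullback.condition, F.map_comp, Category.assoc, adj.left_triangle_components,
        Category.comp_id]

lemma isStableEssentialMono_map [IsIso adj.counit] [F.Faithful] [HasPullbacks C]
    [HasPullbacks X] [PreservesLimitsOfShape WalkingCospan F] {S A : C} {m : S ⟶ A}
    (hm : IsStableEssentialMono m) : IsStableEssentialMono (F.map m) := by
  intro Y u
  obtain ⟨P, r, e, he⟩ := adj.exists_iso_comp_eq_map u
  have hsq : IsPullback (F.map (pullback.fst m r)) (F.map (pullback.snd m r) ≫ e.hom)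
      (F.map m) u :=
    ((IsPullback.of_hasPullback m r).map F).of_iso (Iso.refl _) (Iso.refl _) e (Iso.refl _)
      (by simp) (by simp) (by simp) (by simp [he])
  rw [← hsq.isoPullback_inv_snd]
  exact ((adj.isEssentialMono_map (hm r)).comp_isIso e.hom).isIso_comp _

end CategoryTheory.Adjunction

theorem stableEssentialMono_iff_isIso_map_general
    {C : Type*} [Category C] {X : Type*} [Category X]
    [HasFiniteLimits C] [HasFiniteLimits X]
    (F : C ⥤ X) (G : X ⥤ C)
    (adj : F ⊣ G) [PreservesFiniteLimits F] [F.Faithful] [G.Full] [G.Faithful]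
    (hX : ∀ ⦃S A : X⦄ (n : S ⟶ A), IsStableEssentialMono n → IsIso n)
    {S A : C} (m : S ⟶ A) :
    IsStableEssentialMono m ↔ IsIso (F.map m) :=
  ⟨fun hm => hX _ (adj.isStableEssentialMono_map hm),
    fun _ => isStableEssentialMono_of_isIso_map F m⟩

/-- Let `F : C ⥤ X` be a faithful essential localization such that every pullback stable
essential monomorphism in `X` is an isomorphism. Then a morphism `m` in `C` is a pullback
stable essential monomorphism if and only if `F.map m` is an isomorphism. -/
theorem stableEssentialMono_iff_isIso_map
    {C : Type*} [Category C] {X : Type*} [Category X]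
    [HasFiniteLimits C] [HasFiniteLimits X]
    (F : C ⥤ X) (G : X ⥤ C) (H : X ⥤ C)
    (adj : F ⊣ G) [PreservesFiniteLimits F] [F.Faithful] [G.Full] [G.Faithful]
    (adj' : H ⊣ F)
    (hX : ∀ ⦃S A : X⦄ (n : S ⟶ A), IsStableEssentialMono n → IsIso n)
    {S A : C} (m : S ⟶ A) :
    IsStableEssentialMono m ↔ IsIso (F.map m) :=
  stableEssentialMono_iff_isIso_map_general F G adj hX m
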